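/- Let G be a finite simple graph with a discrete Morse function f, and for each critical vertex v of f let T_v be the tree rooted in v, consisting of all simplices lying on some gradient path ending at v. Then for distinct critical vertices v ≠ w, the rooted trees T_v and T_w are disjoint, and the union of all rooted trees equals the complement of the set of critical edges of f in G. -/
import Mathlib


open Finset

open scoped Classical

variable {V : Type*}

/-- An abstract simplicial complex on vertex type `V`: a finite set of nonempty
finite sets, closed under taking nonempty subsets (faces). -/
def IsComplex [DecidableEq V] (K : Finset (Finset V)) : Prop :=
  (∀ σ ∈ K, σ.Nonempty) ∧ ∀ σ ∈ K, ∀ τ : Finset V, τ ⊆ σ → τ.Nonempty → τ ∈ K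

/-- `f` is a discrete Morse function on the complex `L`: every simplex has at most one
cofacet with smaller-or-equal value, and at most one facet with larger-or-equal value. -/
def IsDMF [DecidableEq V] (L : Finset (Finset V)) (f : Finset V → ℝ) : Prop :=
  ∀ σ ∈ L,
    (L.filter fun τ => σ ⊆ τ ∧ τ.card = σ.card + 1 ∧ f τ ≤ f σ).card ≤ 1 ∧
    (L.filter fun ν => ν ⊆ σ ∧ σ.card = ν.card + 1 ∧ f σ ≤ f ν).card ≤ 1

/-- A simplex `σ` is critical for `f` in the complex `L`. -/
def IsCritical [DecidableEq V] (L : Finset (Finset V)) (f : Finset V → ℝ) (σ : Finset V) :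
    Prop :=
  σ ∈ L ∧
  (∀ τ ∈ L, σ ⊆ τ → τ.card = σ.card + 1 → f σ < f τ) ∧
  (∀ ν ∈ L, ν ⊆ σ → σ.card = ν.card + 1 → f ν < f σ)

/-- `K` is a (simple) graph: a simplicial complex of dimension at most 1. -/
def IsGraph [DecidableEq V] (K : Finset (Finset V)) : Prop :=
  IsComplex K ∧ ∀ σ ∈ K, σ.card ≤ 2

/-- One step of a gradient `V`-path of dimension `(0,1)`: move from vertex `a`
across the edge `{a, b}` (which forms a gradient pair with `a`) to the vertex `b`. -/
def VStep [DecidableEq V] (K : Finset (Finset V)) (f : Finset V → ℝ) (a b : V) : Prop :=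
  a ≠ b ∧ ({a, b} : Finset V) ∈ K ∧ f {a, b} ≤ f ({a} : Finset V)

/-- `l` is a gradient path (in the gradient vector field of `f`) of vertices
from `a` to `b`. -/
def IsVPath [DecidableEq V] (K : Finset (Finset V)) (f : Finset V → ℝ) (l : List V)
    (a b : V) : Prop :=
  l.Chain' (VStep K f) ∧ l.head? = some a ∧ l.getLast? = some b

/-- The vertex `a` is connected to the vertex `b` through a gradient path
in the gradient vector field of `f`. -/
def Conn0 [DecidableEq V] (K : Finset (Finset V)) (f : Finset V → ℝ) (a b : V) : Prop :=
  ∃ l : List V, IsVPath K f l a b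

/-- One step of a gradient path of edges: pass from the edge `e` to the edge `e'`
through a common vertex `v` forming a gradient pair with `e'`. -/
def EStep [DecidableEq V] (K : Finset (Finset V)) (f : Finset V → ℝ)
    (e e' : Finset V) : Prop :=
  e ∈ K ∧ e' ∈ K ∧ e.card = 2 ∧ e'.card = 2 ∧ e ≠ e' ∧
    ∃ v, v ∈ e ∧ v ∈ e' ∧ f e' ≤ f ({v} : Finset V)

/-- `l` is a gradient path of edges from `e` to `e'` in the gradient vector field of `f`. -/
def IsEPath [DecidableEq V] (K : Finset (Finset V)) (f : Finset V → ℝ)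
    (l : List (Finset V)) (e e' : Finset V) : Prop :=
  l.Chain' (EStep K f) ∧ l.head? = some e ∧ l.getLast? = some e'

/-- The edge `e` is connected to the edge `e'` through a gradient path
in the gradient vector field of `f`. -/
def Conn1 [DecidableEq V] (K : Finset (Finset V)) (f : Finset V → ℝ)
    (e e' : Finset V) : Prop :=
  ∃ l : List (Finset V), IsEPath K f l e e'

/-- The `f₁`-critical vertex `a` and the `f₂`-critical vertex `b` are strongly
connected: `a` is connected to `b` via a gradient path in the field of `f₂`, and
`b` is connected to `a` via a gradient path in the field of `f₁`. -/
def Strong0 [DecidableEq V] (K : Finset (Finset V)) (f₁ f₂ : Finset V → ℝ)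
    (a b : V) : Prop :=
  Conn0 K f₂ a b ∧ Conn0 K f₁ b a

/-- The `f₁`-critical edge `e` and the `f₂`-critical edge `e'` are strongly
connected: `e` is connected to `e'` via a gradient path in the field of `f₁`, and
`e'` is connected to `e` via a gradient path in the field of `f₂`. -/
def Strong1 [DecidableEq V] (K : Finset (Finset V)) (f₁ f₂ : Finset V → ℝ)
    (e e' : Finset V) : Prop :=
  Conn1 K f₁ e e' ∧ Conn1 K f₂ e' e

/-- `w` flows to `v` along gradient `V`-paths. -/
def Reach [DecidableEq V] (K : Finset (Finset V)) (f : Finset V → ℝ) : V → V → Prop :=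
  Relation.ReflTransGen (VStep K f)

/-- The simplex `σ` belongs to the tree rooted in `v`: it lies on some gradient
path ending at `v`. -/
def InTree [DecidableEq V] (K : Finset (Finset V)) (f : Finset V → ℝ) (v : V)
    (σ : Finset V) : Prop :=
  σ ∈ K ∧
    ((∃ w, σ = ({w} : Finset V) ∧ Reach K f w v) ∨
      (∃ a b, σ = ({a, b} : Finset V) ∧ VStep K f a b ∧ Reach K f b v))


section AuxLemmas

variable [DecidableEq V] {K : Finset (Finset V)} {f : Finset V → ℝ}

lemma singleton_left_mem (hG : IsGraph K) {a b : V} (h : ({a, b} : Finset V) ∈ K) :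
    ({a} : Finset V) ∈ K :=
  hG.1.2 _ h {a} (by simp) (Finset.singleton_nonempty a)

lemma singleton_right_mem (hG : IsGraph K) {a b : V} (h : ({a, b} : Finset V) ∈ K) :
    ({b} : Finset V) ∈ K :=
  hG.1.2 _ h {b} (by simp) (Finset.singleton_nonempty b)

lemma step_unique (hG : IsGraph K) (hf : IsDMF K f) {a b b' : V}
    (h : VStep K f a b) (h' : VStep K f a b') : b = b' := by
  obtain ⟨hab, hmem, hle⟩ := h
  obtain ⟨hab', hmem', hle'⟩ := h'
  have haK : ({a} : Finset V) ∈ K := singleton_left_mem hG hmem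
  have hcard := (hf _ haK).1
  have h1 : ({a, b} : Finset V) ∈
      K.filter fun τ => ({a} : Finset V) ⊆ τ ∧ τ.card = ({a} : Finset V).card + 1 ∧
        f τ ≤ f ({a} : Finset V) := by
    refine Finset.mem_filter.mpr ⟨hmem, by simp, ?_, hle⟩
    simp [Finset.card_pair hab]
  have h2 : ({a, b'} : Finset V) ∈
      K.filter fun τ => ({a} : Finset V) ⊆ τ ∧ τ.card = ({a} : Finset V).card + 1 ∧
        f τ ≤ f ({a} : Finset V) := by
    refine Finset.mem_filter.mpr ⟨hmem', by simp, ?_, hle'⟩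
    simp [Finset.card_pair hab']
  have heq : ({a, b} : Finset V) = {a, b'} := Finset.card_le_one.mp hcard _ h1 _ h2
  have hb : b ∈ ({a, b'} : Finset V) := heq ▸ (by simp : b ∈ ({a, b} : Finset V))
  rcases Finset.mem_insert.mp hb with h | h
  · exact absurd h.symm hab
  · exact Finset.mem_singleton.mp h

lemma f_lt_of_step (hG : IsGraph K) (hf : IsDMF K f) {a b : V} (h : VStep K f a b) :
    f ({b} : Finset V) < f ({a} : Finset V) := by
  obtain ⟨hab, hmem, hle⟩ := h
  have hfac := (hf _ hmem).2
  have haK : ({a} : Finset V) ∈ K := singleton_left_mem hG hmem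
  have hbK : ({b} : Finset V) ∈ K := singleton_right_mem hG hmem
  by_contra hc
  push_neg at hc
  have hleb : f ({a, b} : Finset V) ≤ f ({b} : Finset V) := hle.trans hc
  have h1 : ({a} : Finset V) ∈
      K.filter fun ν => ν ⊆ ({a, b} : Finset V) ∧ ({a, b} : Finset V).card = ν.card + 1 ∧
        f ({a, b} : Finset V) ≤ f ν := by
    refine Finset.mem_filter.mpr ⟨haK, by simp, ?_, hle⟩
    simp [Finset.card_pair hab]
  have h2 : ({b} : Finset V) ∈
      K.filter fun ν => ν ⊆ ({a, b} : Finset V) ∧ ({a, b} : Finset V).card = ν.card + 1 ∧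
        f ({a, b} : Finset V) ≤ f ν := by
    refine Finset.mem_filter.mpr ⟨hbK, by simp, ?_, hleb⟩
    simp [Finset.card_pair hab]
  have heq : ({a} : Finset V) = {b} := Finset.card_le_one.mp hfac _ h1 _ h2
  exact hab (Finset.singleton_inj.mp heq)

lemma crit_singleton_iff (hG : IsGraph K) {v : V} (hv : ({v} : Finset V) ∈ K) :
    IsCritical K f {v} ↔ ∀ b, ¬ VStep K f v b := by
  constructor
  · rintro ⟨_, hco, _⟩ b ⟨hvb, hmem, hle⟩
    have hlt := hco _ hmem (by simp) (by simp [Finset.card_pair hvb])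
    exact absurd hle (not_le.mpr hlt)
  · intro hterm
    refine ⟨hv, ?_, ?_⟩
    · intro τ hτ hsub hcard
      by_contra hle
      push_neg at hle
      have hτ2 : τ.card = 2 := by simpa using hcard
      obtain ⟨a, b, hab, rfl⟩ := Finset.card_eq_two.mp hτ2
      have hv' : v ∈ ({a, b} : Finset V) := hsub (Finset.mem_singleton_self v)
      rcases Finset.mem_insert.mp hv' with rfl | hv'
      · exact hterm b ⟨hab, hτ, hle⟩
      · have hvb : v = b := Finset.mem_singleton.mp hv'
        subst hvb
        exact hterm a ⟨hab.symm, by rwa [Finset.pair_comm], by rwa [Finset.pair_comm] at hle⟩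
    · intro ν hν hsub hcard
      have hne := hG.1.1 ν hν
      have hν0 : ν.card = 0 := by
        have : (1 : ℕ) = ν.card + 1 := by simpa using hcard
        omega
      rw [Finset.card_eq_zero] at hν0
      subst hν0
      exact absurd hne (by simp)

lemma terminal_reach {v w : V} (hterm : ∀ b, ¬ VStep K f v b) (h : Reach K f v w) : v = w := by
  rcases Relation.ReflTransGen.cases_head h with h | ⟨c, hc, _⟩
  · exact h
  · exact absurd hc (hterm c)

lemma exists_crit_reach (hG : IsGraph K) (hf : IsDMF K f) :
    ∀ (n : ℕ) (u : V), ({u} : Finset V) ∈ K →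
      (K.filter fun τ => f τ < f ({u} : Finset V)).card ≤ n →
      ∃ v, Reach K f u v ∧ IsCritical K f ({v} : Finset V) := by
  intro n
  induction n with
  | zero =>
    intro u hu hcard
    refine ⟨u, Relation.ReflTransGen.refl, (crit_singleton_iff hG hu).mpr ?_⟩
    intro b hb
    have hbK : ({b} : Finset V) ∈ K := singleton_right_mem hG hb.2.1
    have hlt := f_lt_of_step hG hf hb
    have hmem : ({b} : Finset V) ∈ K.filter fun τ => f τ < f ({u} : Finset V) :=
      Finset.mem_filter.mpr ⟨hbK, hlt⟩
    have := Finset.card_pos.mpr ⟨_, hmem⟩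
    omega
  | succ n ih =>
    intro u hu hcard
    by_cases h : ∃ b, VStep K f u b
    · obtain ⟨b, hb⟩ := h
      have hbK : ({b} : Finset V) ∈ K := singleton_right_mem hG hb.2.1
      have hlt := f_lt_of_step hG hf hb
      have hsub : (K.filter fun τ => f τ < f ({b} : Finset V)) ⊆
          (K.filter fun τ => f τ < f ({u} : Finset V)).erase {b} := by
        intro τ hτ
        rw [Finset.mem_filter] at hτ
        refine Finset.mem_erase.mpr ⟨?_, Finset.mem_filter.mpr ⟨hτ.1, hτ.2.trans hlt⟩⟩
        rintro rfl
        exact absurd hτ.2 (lt_irrefl _)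
      have hbmem : ({b} : Finset V) ∈ K.filter fun τ => f τ < f ({u} : Finset V) :=
        Finset.mem_filter.mpr ⟨hbK, hlt⟩
      have hcard' : (K.filter fun τ => f τ < f ({b} : Finset V)).card ≤ n := by
        have h1 := Finset.card_le_card hsub
        have h2 := Finset.card_erase_of_mem hbmem
        have h3 := Finset.card_pos.mpr ⟨_, hbmem⟩
        omega
      obtain ⟨v, hr, hc⟩ := ih b hbK hcard'
      exact ⟨v, Relation.ReflTransGen.head hb hr, hc⟩
    · push_neg at h
      exact ⟨u, Relation.ReflTransGen.refl, (crit_singleton_iff hG hu).mpr h⟩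

end AuxLemmas

/-- The rooted trees of distinct critical vertices are disjoint, and their union
is the complement of the set of critical edges in `K`. -/
theorem rooted_trees_partition [DecidableEq V] (K : Finset (Finset V))
    (f : Finset V → ℝ) (hG : IsGraph K) (hf : IsDMF K f) :
    (∀ v w : V, IsCritical K f {v} → IsCritical K f {w} → v ≠ w →
      ∀ σ : Finset V, InTree K f v σ → ¬ InTree K f w σ) ∧
    (∀ σ ∈ K,
      (∃ v : V, IsCritical K f {v} ∧ InTree K f v σ) ↔
        ¬ (IsCritical K f σ ∧ σ.card = 2)) := by
  constructor
  · intro v w hv hw hvw σ hσv hσw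
    have hvterm : ∀ b, ¬ VStep K f v b := (crit_singleton_iff hG hv.1).mp hv
    have hwterm : ∀ b, ¬ VStep K f w b := (crit_singleton_iff hG hw.1).mp hw
    have key : ∀ x, Reach K f x v → Reach K f x w → False := by
      intro x h1 h2
      have hru : Relator.RightUnique (VStep K f) := by
        intro a b c hb hc
        exact step_unique hG hf hb hc
      rcases Relation.ReflTransGen.total_of_right_unique hru h1 h2 with h | h
      · exact hvw (terminal_reach hvterm h)
      · exact hvw ((terminal_reach hwterm h).symm)
    obtain ⟨hσK, h1⟩ := hσv
    obtain ⟨-, h2⟩ := hσw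
    rcases h1 with ⟨u, rfl, hru⟩ | ⟨a, b, rfl, hstep, hrb⟩
    · rcases h2 with ⟨u', hu', hru'⟩ | ⟨a, b, hab, hstep, hrb⟩
      · have huu : u = u' := Finset.singleton_inj.mp hu'
        exact key u hru (huu ▸ hru')
      · have := congrArg Finset.card hab
        simp [Finset.card_pair hstep.1] at this
    · rcases h2 with ⟨u', hu', hru'⟩ | ⟨a', b', hab', hstep', hrb'⟩
      · have := congrArg Finset.card hu'
        simp [Finset.card_pair hstep.1] at this
      · have ha' : a' ∈ ({a, b} : Finset V) := hab' ▸ (by simp : a' ∈ ({a', b'} : Finset V))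
        have hb' : b' ∈ ({a, b} : Finset V) := hab' ▸ (by simp : b' ∈ ({a', b'} : Finset V))
        rcases Finset.mem_insert.mp ha' with h | h
        · subst h
          rcases Finset.mem_insert.mp hb' with h | h
          · exact absurd h.symm hstep'.1
          · have hbb : b' = b := Finset.mem_singleton.mp h
            rw [hbb] at hrb'
            exact key b hrb hrb'
        · have haa : a' = b := Finset.mem_singleton.mp h
          subst haa
          have hf1 := f_lt_of_step hG hf hstep
          have hf2 := f_lt_of_step hG hf hstep'
          rcases Finset.mem_insert.mp hb' with h | h
          · subst h
            exact absurd hf1 (not_lt.mpr hf2.le)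
          · exact absurd (Finset.mem_singleton.mp h).symm hstep'.1
  · intro σ hσ
    constructor
    · rintro ⟨v, hv, hσK, h⟩ ⟨hcrit, hcard2⟩
      rcases h with ⟨u, rfl, -⟩ | ⟨a, b, rfl, hstep, -⟩
      · simp at hcard2
      · have haK : ({a} : Finset V) ∈ K := singleton_left_mem hG hσK
        have hlt := hcrit.2.2 {a} haK (by simp) (by simp [hcard2])
        exact absurd hstep.2.2 (not_le.mpr hlt)
    · intro hnc
      have hne := hG.1.1 σ hσ
      have hle2 := hG.2 σ hσ
      have hpos : 1 ≤ σ.card := Finset.one_le_card.mpr hne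
      rcases Nat.lt_or_ge σ.card 2 with hlt | hge
      · have hc1 : σ.card = 1 := by omega
        obtain ⟨u, rfl⟩ := Finset.card_eq_one.mp hc1
        obtain ⟨v, hr, hc⟩ := exists_crit_reach hG hf _ u hσ le_rfl
        exact ⟨v, hc, hσ, Or.inl ⟨u, rfl, hr⟩⟩
      · have hc2' : σ.card = 2 := le_antisymm hle2 hge
        obtain ⟨a, b, hab, rfl⟩ := Finset.card_eq_two.mp hc2'
        have hc2 : ({a, b} : Finset V).card = 2 := Finset.card_pair hab
        have hnotcrit : ¬ IsCritical K f {a, b} := fun hc => hnc ⟨hc, hc2⟩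
        have hco : ∀ τ ∈ K, ({a, b} : Finset V) ⊆ τ →
            τ.card = ({a, b} : Finset V).card + 1 → f {a, b} < f τ := by
          intro τ hτ _ hcard
          rw [hc2] at hcard
          have := hG.2 τ hτ
          omega
        have hfacet : ¬ ∀ ν ∈ K, ν ⊆ ({a, b} : Finset V) →
            ({a, b} : Finset V).card = ν.card + 1 → f ν < f ({a, b} : Finset V) := by
          intro hfa
          exact hnotcrit ⟨hσ, hco, hfa⟩
        push_neg at hfacet
        obtain ⟨ν, hν, hsub, hcard, hge'⟩ := hfacet
        have hν1 : ν.card = 1 := by rw [hc2] at hcard; omega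
        obtain ⟨c, rfl⟩ := Finset.card_eq_one.mp hν1
        have hcmem : c ∈ ({a, b} : Finset V) := hsub (Finset.mem_singleton_self c)
        rcases Finset.mem_insert.mp hcmem with h | h
        · subst h
          have hbK : ({b} : Finset V) ∈ K := singleton_right_mem hG hσ
          obtain ⟨v, hr, hcv⟩ := exists_crit_reach hG hf _ b hbK le_rfl
          exact ⟨v, hcv, hσ, Or.inr ⟨c, b, rfl, ⟨hab, hσ, hge'⟩, hr⟩⟩
        · have hcb : c = b := Finset.mem_singleton.mp h
          subst hcb
          have hcomm : ({a, c} : Finset V) = {c, a} := Finset.pair_comm a c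
          have hstep : VStep K f c a :=
            ⟨fun h => hab h.symm, by rw [← hcomm]; exact hσ, by rw [← hcomm]; exact hge'⟩
          have haK : ({a} : Finset V) ∈ K := singleton_left_mem hG hσ
          obtain ⟨v, hr, hcv⟩ := exists_crit_reach hG hf _ a haK le_rfl
          exact ⟨v, hcv, hσ, Or.inr ⟨c, a, hcomm, hstep, hr⟩⟩
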